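/- arXiv:1902.08372 — 2 statements merged into one kernel-verified Lean document; each statement's English description precedes it below -/
import Mathlib

section
/- Let μ be a compact-finite deficient topological measure on a locally compact Hausdorff space X and g, h ∈ C₀⁺(X) with g·h = 0 (pointwise). Then for every compact set K, ∫_K (g+h) dμ = ∫_K g dμ + ∫_K h dμ; that is, ∫₀^∞ μ(K ∩ (g+h)⁻¹([t,∞))) dt = ∫₀^∞ μ(K ∩ g⁻¹([t,∞))) dt + ∫₀^∞ μ(K ∩ h⁻¹([t,∞))) dt. -/
open MeasureTheory Set Filter Topology ENNReal

/-!
Where `g h = 0`, at each point one of `g`, `h` vanishes, so for `t > 0` the superlevel set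
`{g + h ≥ t}` is the disjoint union of `{g ≥ t}` and `{h ≥ t}`. Intersected with `K` these are
disjoint compact sets, so additivity of `μ` makes the integrands agree for every `t > 0`;
the integral then splits because `t ↦ μ(K ∩ {g ≥ t})` is antitone (compact sets being closed,
regularity makes `μ` monotone on them), hence measurable.
-/

/-- A deficient topological measure on a topological space `X`: a set function with values in
`[0,∞]` (recorded on all sets, but constrained only on open and closed sets) that is finitely
additive on disjoint compact sets, inner regular on open sets with respect to compact sets,
and outer regular on closed sets with respect to open sets. -/
structure DeficientTopologicalMeasure (X : Type*) [TopologicalSpace X] where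
  m : Set X → ℝ≥0∞
  additive : ∀ ⦃C K : Set X⦄, IsCompact C → IsCompact K → Disjoint C K →
    m (C ∪ K) = m C + m K
  innerRegular : ∀ ⦃U : Set X⦄, IsOpen U →
    m U = ⨆ (K : Set X) (_ : IsCompact K) (_ : K ⊆ U), m K
  outerRegular : ∀ ⦃F : Set X⦄, IsClosed F →
    m F = ⨅ (U : Set X) (_ : IsOpen U) (_ : F ⊆ U), m U

section Superlevel

variable {X : Type*} {g h : X → ℝ}

theorem preimage_add_Ici_eq_union_of_mul_eq_zero (hgh : ∀ x, g x * h x = 0) {t : ℝ}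
    (ht : 0 < t) :
    (fun x => g x + h x) ⁻¹' Ici t = g ⁻¹' Ici t ∪ h ⁻¹' Ici t := by
  ext x
  simp only [mem_preimage, mem_Ici, mem_union]
  rcases mul_eq_zero.mp (hgh x) with hx | hx <;> simp [hx, not_le.mpr ht]

theorem disjoint_preimage_Ici_of_mul_eq_zero (hgh : ∀ x, g x * h x = 0) {t : ℝ} (ht : 0 < t) :
    Disjoint (g ⁻¹' Ici t) (h ⁻¹' Ici t) := by
  refine Set.disjoint_left.mpr fun x (hgx : t ≤ g x) (hhx : t ≤ h x) => ?_
  exact (mul_pos (ht.trans_le hgx) (ht.trans_le hhx)).ne' (hgh x)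

end Superlevel

namespace DeficientTopologicalMeasure

variable {X : Type*} [TopologicalSpace X] (μ : DeficientTopologicalMeasure X)

theorem m_mono_of_isCompact [T2Space X] {C K : Set X} (hC : IsCompact C) (hK : IsCompact K)
    (hCK : C ⊆ K) : μ.m C ≤ μ.m K := by
  rw [μ.outerRegular hK.isClosed]
  refine le_iInf fun U => le_iInf fun hU => le_iInf fun hKU => ?_
  rw [μ.innerRegular hU]
  exact le_iSup_of_le C (le_iSup_of_le hC (le_iSup_of_le (hCK.trans hKU) le_rfl))

theorem antitone_m_inter_preimage_Ici [T2Space X] {K : Set X} (hK : IsCompact K) {f : X → ℝ}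
    (hf : Continuous f) : Antitone fun t : ℝ => μ.m (K ∩ f ⁻¹' Ici t) := fun _ _ hst =>
  μ.m_mono_of_isCompact (hK.inter_right (isClosed_Ici.preimage hf))
    (hK.inter_right (isClosed_Ici.preimage hf))
    (inter_subset_inter_right K (preimage_mono (Ici_subset_Ici.mpr hst)))

theorem m_inter_preimage_add_Ici {K : Set X} (hK : IsCompact K) {g h : X → ℝ}
    (hg : Continuous g) (hh : Continuous h) (hgh : ∀ x, g x * h x = 0) {t : ℝ} (ht : 0 < t) :
    μ.m (K ∩ (fun x => g x + h x) ⁻¹' Ici t) =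
      μ.m (K ∩ g ⁻¹' Ici t) + μ.m (K ∩ h ⁻¹' Ici t) := by
  rw [preimage_add_Ici_eq_union_of_mul_eq_zero hgh ht, inter_union_distrib_left]
  exact μ.additive (hK.inter_right (isClosed_Ici.preimage hg))
    (hK.inter_right (isClosed_Ici.preimage hh))
    ((disjoint_preimage_Ici_of_mul_eq_zero hgh ht).mono inter_subset_right inter_subset_right)

end DeficientTopologicalMeasure

theorem stmt6_general {X : Type*} [TopologicalSpace X] [T2Space X]
    (μ : DeficientTopologicalMeasure X)
    (g h : X → ℝ) (hg : Continuous g) (hh : Continuous h)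
    (hgh : ∀ x, g x * h x = 0)
    (K : Set X) (hK : IsCompact K) :
    ∫⁻ t in Ioi (0 : ℝ), μ.m (K ∩ (fun x => g x + h x) ⁻¹' (Ici t)) =
      (∫⁻ t in Ioi (0 : ℝ), μ.m (K ∩ g ⁻¹' (Ici t))) +
        ∫⁻ t in Ioi (0 : ℝ), μ.m (K ∩ h ⁻¹' (Ici t)) := by
  rw [setLIntegral_congr_fun measurableSet_Ioi
    fun t ht => μ.m_inter_preimage_add_Ici hK hg hh hgh ht]
  exact lintegral_add_left (μ.antitone_m_inter_preimage_Ici hK hg).measurable _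

/-- Let `μ` be a compact-finite deficient topological measure on a locally
compact Hausdorff space and `g, h ∈ C₀⁺(X)` with `g·h = 0`. Then for every compact `K`,
`∫_K (g+h) dμ = ∫_K g dμ + ∫_K h dμ` for the quasi-integrals
`∫_K g dμ = ∫₀^∞ μ(K ∩ g⁻¹([t,∞))) dt`. -/
theorem stmt6 {X : Type*} [TopologicalSpace X] [LocallyCompactSpace X] [T2Space X]
    (μ : DeficientTopologicalMeasure X)
    (hcf : ∀ K : Set X, IsCompact K → μ.m K < ∞)
    (g h : X → ℝ) (hg : Continuous g) (hh : Continuous h)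
    (hg0 : ∀ x, 0 ≤ g x) (hh0 : ∀ x, 0 ≤ h x)
    (hginf : Tendsto g (cocompact X) (nhds 0)) (hhinf : Tendsto h (cocompact X) (nhds 0))
    (hgh : ∀ x, g x * h x = 0)
    (K : Set X) (hK : IsCompact K) :
    ∫⁻ t in Ioi (0 : ℝ), μ.m (K ∩ (fun x => g x + h x) ⁻¹' (Ici t)) =
      (∫⁻ t in Ioi (0 : ℝ), μ.m (K ∩ g ⁻¹' (Ici t))) +
        ∫⁻ t in Ioi (0 : ℝ), μ.m (K ∩ h ⁻¹' (Ici t)) :=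
  stmt6_general μ g h hg hh hgh K hK
end

section
/- Let μ be a deficient topological measure on a locally compact Hausdorff space X with μ(X) < ∞ and g ∈ C₀⁺(X). Then for every compact set K, ∫₀^∞ μ(K ∩ g⁻¹([t,∞))) dt = inf{ ∫₀^∞ μ((fg)⁻¹([t,∞))) dt : f ∈ C_c(X), 0 ≤ f ≤ 1, f = 1 on K }. -/
open MeasureTheory Set Filter Topology ENNReal

/-!
The inequality `≤` is monotonicity: `K ∩ {g ≥ t} ⊆ {f g ≥ t}` whenever `f = 1` on `K`.

For `≥`, let `M` bound `g` on a compact neighbourhood `C` of `K` and fix a mesh `δ > 0`.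
Outer regularity gives, for each level `i δ ≤ M`, an open `U_i ⊇ K ∩ {g ≥ i δ}` with
`μ(U_i) ≤ μ(K ∩ {g ≥ i δ}) + δ`, and one open `W ⊇ K` with `W ∩ {g ≥ i δ} ⊆ U_i` for all `i`.
An Urysohn function `f` for `K ⊆ W ∩ interior C` has `{f g ≥ s + δ} ⊆ U_i` with `i δ` the grid
point in `[s, s + δ)`, so `μ({f g ≥ s + δ}) ≤ μ(K ∩ {g ≥ s}) + δ` for `0 < s ≤ M`, while
`{f g ≥ t}` is empty for `t > M`. Integrating, the right side is within `δ (μ(X) + M)` of the left.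
-/

theorem preimage_mul_Ici_subset {X : Type*} {f g : X → ℝ} {V : Set X}
    (hf01 : ∀ x, f x ∈ Icc (0 : ℝ) 1) (hfV : ∀ x ∉ V, f x = 0) {t : ℝ} (ht : 0 < t) :
    (fun x => f x * g x) ⁻¹' Ici t ⊆ V ∩ g ⁻¹' Ici t := by
  intro x hx
  simp only [mem_preimage, mem_Ici] at hx
  refine ⟨by_contra fun hxV => ?_, ?_⟩
  · rw [hfV x hxV, zero_mul] at hx
    exact ht.not_ge hx
  · obtain ⟨hf0, hf1⟩ := hf01 x
    rcases le_or_gt 0 (g x) with hg0 | hg0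
    · exact hx.trans (mul_le_of_le_one_left hg0 hf1)
    · exact absurd (hx.trans (mul_nonpos_of_nonneg_of_nonpos hf0 hg0.le)) ht.not_ge

theorem ceil_div_mul_mem_Ico {s δ : ℝ} (hs : 0 ≤ s) (hδ : 0 < δ) :
    (⌈s / δ⌉₊ : ℝ) * δ ∈ Ico s (s + δ) := by
  constructor
  · exact (div_le_iff₀ hδ).mp (Nat.le_ceil _)
  · calc (⌈s / δ⌉₊ : ℝ) * δ < (s / δ + 1) * δ :=
          mul_lt_mul_of_pos_right (Nat.ceil_lt_add_one (by positivity)) hδ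
      _ = s + δ := by field_simp

theorem setLIntegral_Ioi_comp_add_right (F : ℝ → ℝ≥0∞) (a δ : ℝ) :
    ∫⁻ s in Ioi a, F (s + δ) = ∫⁻ t in Ioi (a + δ), F t := by
  rw [← (measurePreserving_add_right volume δ).setLIntegral_comp_preimage_emb
    (measurableEmbedding_addRight δ) F, preimage_add_const_Ioi, add_sub_cancel_right]

theorem lintegral_Ioi_le_of_shift_le {R L : ℝ → ℝ≥0∞} {c ε : ℝ≥0∞} {δ M : ℝ} (hδ : 0 ≤ δ)
    (hRc : ∀ t, R t ≤ c) (hRL : ∀ s, 0 < s → s ≤ M → R (s + δ) ≤ L s + ε)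
    (hR0 : ∀ s, 0 < s → M < s → R (s + δ) = 0) :
    ∫⁻ t in Ioi (0 : ℝ), R t ≤
      (∫⁻ t in Ioi (0 : ℝ), L t) + ENNReal.ofReal δ * c + ε * ENNReal.ofReal M := by
  have hshift : ∀ s ∈ Ioi (0 : ℝ), R (s + δ) ≤ L s + (Iic M).indicator (fun _ => ε) s := by
    intro s hs
    by_cases hsM : s ≤ M
    · simpa [indicator_of_mem (show s ∈ Iic M from hsM)] using hRL s hs hsM
    · simp [hR0 s hs (not_le.mp hsM)]
  calc ∫⁻ t in Ioi (0 : ℝ), R t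
      = (∫⁻ t in Ioc 0 δ, R t) + ∫⁻ s in Ioi 0, R (s + δ) := by
        rw [setLIntegral_Ioi_comp_add_right, zero_add, ← Ioc_union_Ioi_eq_Ioi hδ,
          lintegral_union measurableSet_Ioi Ioc_disjoint_Ioi_same]
    _ ≤ (∫⁻ _ in Ioc 0 δ, c) + ∫⁻ s in Ioi 0, (L s + (Iic M).indicator (fun _ => ε) s) :=
        add_le_add (setLIntegral_mono' measurableSet_Ioc fun t _ => hRc t)
          (setLIntegral_mono' measurableSet_Ioi hshift)
    _ = (∫⁻ t in Ioi (0 : ℝ), L t) + ENNReal.ofReal δ * c + ε * ENNReal.ofReal M := by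
        rw [lintegral_add_right _ (measurable_const.indicator measurableSet_Iic),
          lintegral_indicator_const measurableSet_Iic, Measure.restrict_apply measurableSet_Iic,
          inter_comm, Ioi_inter_Iic, setLIntegral_const, Real.volume_Ioc, Real.volume_Ioc,
          sub_zero, sub_zero]
        ring

namespace DeficientTopologicalMeasure

variable {X : Type*} [TopologicalSpace X] (μ : DeficientTopologicalMeasure X)

theorem m_le_of_isCompact_of_isOpen {C U : Set X} (hC : IsCompact C) (hU : IsOpen U)
    (hCU : C ⊆ U) : μ.m C ≤ μ.m U := by
  rw [μ.innerRegular hU]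
  exact le_iSup₂_of_le C hC (le_iSup_of_le hCU le_rfl)

theorem m_le_of_isCompact_of_isClosed {C F : Set X} (hC : IsCompact C) (hF : IsClosed F)
    (hCF : C ⊆ F) : μ.m C ≤ μ.m F := by
  rw [μ.outerRegular hF]
  exact le_iInf₂ fun U hU => le_iInf fun hFU => μ.m_le_of_isCompact_of_isOpen hC hU (hCF.trans hFU)

theorem m_le_univ_of_isClosed {F : Set X} (hF : IsClosed F) : μ.m F ≤ μ.m univ := by
  rw [μ.outerRegular hF]
  exact iInf₂_le_of_le univ isOpen_univ (iInf_le_of_le (subset_univ F) le_rfl)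

theorem m_empty (hμ : μ.m univ < ∞) : μ.m ∅ = 0 := by
  have hadd := μ.additive isCompact_empty isCompact_empty (disjoint_empty _)
  have hne : μ.m ∅ ≠ ∞ := ((μ.m_le_univ_of_isClosed isClosed_empty).trans_lt hμ).ne
  rw [union_empty] at hadd
  nth_rewrite 1 [← add_zero (μ.m ∅)] at hadd
  exact ((ENNReal.add_right_inj hne).mp hadd).symm

theorem exists_isOpen_superset_m_le_add (hμ : μ.m univ < ∞) {F : Set X} (hF : IsClosed F)
    {ε : ℝ≥0∞} (hε : ε ≠ 0) : ∃ U, IsOpen U ∧ F ⊆ U ∧ μ.m U ≤ μ.m F + ε := by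
  have hlt : μ.m F < μ.m F + ε :=
    ENNReal.lt_add_right ((μ.m_le_univ_of_isClosed hF).trans_lt hμ).ne hε
  nth_rewrite 1 [μ.outerRegular hF] at hlt
  simp only [iInf_lt_iff] at hlt
  obtain ⟨U, hU, hFU, hUlt⟩ := hlt
  exact ⟨U, hU, hFU, hUlt.le⟩

theorem exists_isOpen_superset_forall_inter_subset [T2Space X] (hμ : μ.m univ < ∞) {K : Set X}
    (hK : IsCompact K) {ι : Type*} (T : Finset ι) {F : ι → Set X} (hF : ∀ i, IsClosed (F i))
    {ε : ℝ≥0∞} (hε : ε ≠ 0) :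
    ∃ W, IsOpen W ∧ K ⊆ W ∧
      ∀ i ∈ T, ∃ U, IsOpen U ∧ W ∩ F i ⊆ U ∧ μ.m U ≤ μ.m (K ∩ F i) + ε := by
  choose U hU hKU hμU using fun i =>
    μ.exists_isOpen_superset_m_le_add hμ (hK.isClosed.inter (hF i)) hε
  refine ⟨⋂ i ∈ T, U i ∪ (F i)ᶜ, isOpen_biInter_finset fun i _ => (hU i).union (hF i).isOpen_compl,
    fun x hx => mem_iInter₂.mpr fun i _ => ?_, fun i hi => ⟨U i, hU i, ?_, hμU i⟩⟩
  · by_cases hxF : x ∈ F i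
    exacts [Or.inl (hKU i ⟨hx, hxF⟩), Or.inr hxF]
  · rintro x ⟨hxW, hxF⟩
    exact (mem_iInter₂.mp hxW i hi).resolve_right (not_not_intro hxF)

theorem lintegral_m_inter_le_of_eqOn_one {f g : X → ℝ} (hf : Continuous f) (hg : Continuous g)
    {K : Set X} (hK : IsCompact K) (hfK : ∀ x ∈ K, f x = 1) :
    ∫⁻ t in Ioi (0 : ℝ), μ.m (K ∩ g ⁻¹' Ici t) ≤
      ∫⁻ t in Ioi (0 : ℝ), μ.m ((fun x => f x * g x) ⁻¹' Ici t) := by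
  refine lintegral_mono fun t => μ.m_le_of_isCompact_of_isClosed
    (hK.inter_right (isClosed_Ici.preimage hg)) (isClosed_Ici.preimage (hf.mul hg)) ?_
  rintro x ⟨hxK, hxg⟩
  simpa [hfK x hxK] using hxg

theorem exists_cutoff_lintegral_le [T2Space X] [LocallyCompactSpace X] (hμ : μ.m univ < ∞)
    {g : X → ℝ} (hg : Continuous g) {K C : Set X} (hK : IsCompact K) (hC : IsCompact C)
    (hKC : K ⊆ interior C) {M : ℝ} (hM : ∀ x ∈ C, g x ≤ M) {δ : ℝ} (hδ : 0 < δ) :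
    ∃ f : X → ℝ, Continuous f ∧ HasCompactSupport f ∧ (∀ x, f x ∈ Icc (0 : ℝ) 1) ∧
      (∀ x ∈ K, f x = 1) ∧
      ∫⁻ t in Ioi (0 : ℝ), μ.m ((fun x => f x * g x) ⁻¹' Ici t) ≤
        (∫⁻ t in Ioi (0 : ℝ), μ.m (K ∩ g ⁻¹' Ici t)) +
          ENNReal.ofReal δ * (μ.m univ + ENNReal.ofReal M) := by
  have hlevel : ∀ t, IsClosed (g ⁻¹' Ici t) := fun t => isClosed_Ici.preimage hg
  obtain ⟨W, hW, hKW, hWU⟩ := μ.exists_isOpen_superset_forall_inter_subset hμ hK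
    (Finset.range (⌈M / δ⌉₊ + 1)) (fun i => hlevel ((i : ℝ) * δ)) (ENNReal.ofReal_pos.2 hδ).ne'
  obtain ⟨f, hf1, hf0, hfc, hf01⟩ := exists_continuous_one_zero_of_isCompact hK
    (hW.inter isOpen_interior).isClosed_compl
    (disjoint_compl_right.mono_left (subset_inter hKW hKC))
  refine ⟨f, f.continuous, hfc, hf01, fun x hx => hf1 hx, ?_⟩
  set S : ℝ → Set X := fun t => (fun x => f x * g x) ⁻¹' Ici t
  have hSsub : ∀ t, 0 < t → S t ⊆ (W ∩ interior C) ∩ g ⁻¹' Ici t :=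
    fun t ht => preimage_mul_Ici_subset hf01 (fun x hx => hf0 hx) ht
  have hSclosed : ∀ t, IsClosed (S t) := fun t => isClosed_Ici.preimage (f.continuous.mul hg)
  have hScompact : ∀ t, 0 < t → IsCompact (S t) := fun t ht =>
    hC.of_isClosed_subset (hSclosed t) fun x hx => interior_subset (hSsub t ht hx).1.2
  refine (lintegral_Ioi_le_of_shift_le (R := fun t => μ.m (S t))
    (L := fun t => μ.m (K ∩ g ⁻¹' Ici t)) (ε := ENNReal.ofReal δ) (M := M) hδ.le
    (fun t => μ.m_le_univ_of_isClosed (hSclosed t)) (fun s hs hsM => ?_)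
    (fun s hs hMs => ?_)).trans_eq (by ring)
  · obtain ⟨hsi, his⟩ := ceil_div_mul_mem_Ico hs.le hδ
    obtain ⟨U, hU, hWU, hμU⟩ :=
      hWU ⌈s / δ⌉₊ (Finset.mem_range_succ_iff.2 (Nat.ceil_le_ceil (by gcongr)))
    have hsδ : 0 < s + δ := by positivity
    calc μ.m (S (s + δ)) ≤ μ.m U :=
          μ.m_le_of_isCompact_of_isOpen (hScompact _ hsδ) hU fun x hx =>
            hWU ⟨(hSsub _ hsδ hx).1.1, his.le.trans (hSsub _ hsδ hx).2⟩
      _ ≤ μ.m (K ∩ g ⁻¹' Ici (⌈s / δ⌉₊ * δ)) + ENNReal.ofReal δ := hμU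
      _ ≤ μ.m (K ∩ g ⁻¹' Ici s) + ENNReal.ofReal δ := by
          gcongr 1
          exact μ.m_le_of_isCompact_of_isClosed (hK.inter_right (hlevel _))
            (hK.isClosed.inter (hlevel s))
            (inter_subset_inter_right _ (preimage_mono (Ici_subset_Ici.2 hsi)))
  · have hempty : S (s + δ) = ∅ := eq_empty_of_forall_notMem fun x hx => by
      have hx' := hSsub _ (by positivity) hx
      linarith [hM x (interior_subset hx'.1.2), show s + δ ≤ g x from hx'.2]
    rw [hempty, μ.m_empty hμ]

end DeficientTopologicalMeasure

theorem stmt11_general {X : Type*} [TopologicalSpace X] [LocallyCompactSpace X] [T2Space X]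
    (μ : DeficientTopologicalMeasure X) (hμfin : μ.m univ < ∞)
    (g : X → ℝ) (hg : Continuous g)
    (K : Set X) (hK : IsCompact K) :
    (∫⁻ t in Ioi (0 : ℝ), μ.m (K ∩ g ⁻¹' (Ici t))) =
      ⨅ (f : X → ℝ) (_ : Continuous f) (_ : HasCompactSupport f)
        (_ : ∀ x, f x ∈ Icc (0 : ℝ) 1) (_ : ∀ x ∈ K, f x = 1),
        ∫⁻ t in Ioi (0 : ℝ), μ.m ((fun x => f x * g x) ⁻¹' (Ici t)) := by
  refine le_antisymm (le_iInf₂ fun f hf => le_iInf₂ fun _ _ => le_iInf fun hfK =>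
    μ.lintegral_m_inter_le_of_eqOn_one hf hg hK hfK) ?_
  obtain ⟨C, hC, hKC⟩ := exists_compact_superset hK
  obtain ⟨M, hM⟩ := hC.bddAbove_image hg.continuousOn
  set A := ∫⁻ t in Ioi (0 : ℝ), μ.m (K ∩ g ⁻¹' Ici t)
  have hlim : Tendsto (fun δ : ℝ => A + ENNReal.ofReal δ * (μ.m univ + ENNReal.ofReal M))
      (𝓝[>] 0) (𝓝 A) := by
    have hδ : Tendsto ENNReal.ofReal (𝓝[>] 0) (𝓝 0) := by
      rw [← ENNReal.ofReal_zero]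
      exact (ENNReal.continuous_ofReal.tendsto 0).mono_left nhdsWithin_le_nhds
    simpa using (ENNReal.Tendsto.mul_const hδ
      (Or.inr (add_ne_top.2 ⟨hμfin.ne, ofReal_ne_top⟩))).const_add A
  refine ge_of_tendsto hlim (eventually_nhdsWithin_of_forall fun δ hδ => ?_)
  obtain ⟨f, hfc, hfs, hf01, hfK, hf⟩ := μ.exists_cutoff_lintegral_le hμfin hg hK hC hKC
    (fun x hx => hM (mem_image_of_mem g hx)) hδ
  exact (iInf₂_le_of_le f hfc (iInf₂_le_of_le hfs hf01 (iInf_le_of_le hfK le_rfl))).trans hf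

/-- Let `μ` be a finite deficient topological measure on a locally compact
Hausdorff space and `g ∈ C₀⁺(X)`. Then for every compact `K`,
`∫₀^∞ μ(K ∩ g⁻¹([t,∞))) dt = inf{ ∫₀^∞ μ((fg)⁻¹([t,∞))) dt : f ∈ C_c(X), 0 ≤ f ≤ 1,
f = 1 on K }`. -/
theorem stmt11 {X : Type*} [TopologicalSpace X] [LocallyCompactSpace X] [T2Space X]
    (μ : DeficientTopologicalMeasure X) (hμfin : μ.m univ < ∞)
    (g : X → ℝ) (hg : Continuous g) (hg0 : ∀ x, 0 ≤ g x)
    (hginf : Tendsto g (cocompact X) (nhds 0))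
    (K : Set X) (hK : IsCompact K) :
    (∫⁻ t in Ioi (0 : ℝ), μ.m (K ∩ g ⁻¹' (Ici t))) =
      ⨅ (f : X → ℝ) (_ : Continuous f) (_ : HasCompactSupport f)
        (_ : ∀ x, f x ∈ Icc (0 : ℝ) 1) (_ : ∀ x ∈ K, f x = 1),
        ∫⁻ t in Ioi (0 : ℝ), μ.m ((fun x => f x * g x) ⁻¹' (Ici t)) :=
  stmt11_general μ hμfin g hg K hK
end
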